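/- The identity r×r matrix I is an order unit of the pair (Sym_r(ℝ[x]_{(Σ)}), Sym_r(ℝ[x]_{(Σ)})₊): for every symmetric matrix G with entries in ℝ[x]_{(Σ)}, there exists a positive integer N such that N·I + G has positive semidefinite coefficients. -/

import Mathlib

open MvPolynomial Matrix

noncomputable section

/-- The field of rational functions in `n` variables over `ℝ`. -/
abbrev RatField (n : ℕ) := FractionRing (MvPolynomial (Fin n) ℝ)

/-- Inclusion of polynomials into the field of rational functions. -/
noncomputable def ι (n : ℕ) : MvPolynomial (Fin n) ℝ →+* RatField n :=
  algebraMap (MvPolynomial (Fin n) ℝ) (RatField n)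

/-- The linear form `Σ = x₁ + ⋯ + xₙ`. -/
noncomputable def sigma (n : ℕ) : MvPolynomial (Fin n) ℝ := ∑ i, X i

/-- The matrix `Σ_α A_α ⊗ x^α/Σ^{|α|}` determined by a finitely supported family of real
matrix coefficients `A_α`. -/
noncomputable def rep (n r : ℕ) (A : (Fin n →₀ ℕ) →₀ Matrix (Fin r) (Fin r) ℝ) :
    Matrix (Fin r) (Fin r) (RatField n) :=
  A.sum fun α Aα =>
    (ι n (monomial α (1 : ℝ)) / (ι n (sigma n)) ^ (α.sum fun _ e => e)) •
      Aα.map (fun c => ι n (C c))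

/-- `G ∈ Sym_r(ℝ[x]_{(Σ)})₊`: `G = Σ_α A_α x^α/Σ^{|α|}` with all `A_α` positive
semidefinite. -/
def HasPSDCoeffs (n r : ℕ) (G : Matrix (Fin r) (Fin r) (RatField n)) : Prop :=
  ∃ A : (Fin n →₀ ℕ) →₀ Matrix (Fin r) (Fin r) ℝ,
    (∀ α, (A α).PosSemidef) ∧ G = rep n r A

/-- `G ∈ Sym_r(ℝ[x]_{(Σ)})`: `G` is symmetric with all entries in the homogeneous
localization `ℝ[x]_{(Σ)}`. -/
def InSymLoc (n r : ℕ) (G : Matrix (Fin r) (Fin r) (RatField n)) : Prop :=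
  G.IsSymm ∧ ∀ i j, ∃ (d : ℕ) (f : MvPolynomial (Fin n) ℝ), f.IsHomogeneous d ∧
    G i j = ι n f / (ι n (sigma n)) ^ d

/-!
Clearing denominators writes `G = g / Σ^D` with `g` a symmetric matrix of forms of degree `D`.
By the multinomial theorem `Σ^D = ∑_{|α| = D} binom(D, α) x^α` has all its coefficients of
degree `D` at least `1`, so `N • I + G = ∑_α (N binom(D, α) I + g_α) x^α / Σ^D`, where `g_α` is the
(symmetric, real) matrix of `α`-coefficients of `g`. Once `N` bounds the absolute row sums of all
the `g_α`, each coefficient matrix is diagonally dominant, hence positive semidefinite by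
Gershgorin's theorem.
-/

open Finset

theorem Matrix.posSemidef_of_sum_abs_offDiag_le {m : Type*} [Fintype m] [DecidableEq m]
    {A : Matrix m m ℝ} (hA : A.IsSymm) (hdom : ∀ i, ∑ j ∈ univ.erase i, |A i j| ≤ A i i) :
    A.PosSemidef := by
  have hH : A.IsHermitian := hA
  rw [hH.posSemidef_iff_eigenvalues_nonneg]
  refine Pi.le_def.mpr fun k => ?_
  have hμ : Module.End.HasEigenvalue (toLin' A) (hH.eigenvalues k) := by
    rw [Module.End.hasEigenvalue_iff_mem_spectrum, spectrum_toLin']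
    exact hH.eigenvalues_mem_spectrum_real k
  obtain ⟨i, hi⟩ := eigenvalue_mem_ball hμ
  rw [Metric.mem_closedBall, Real.dist_eq] at hi
  simp only [Real.norm_eq_abs] at hi
  show (0 : ℝ) ≤ _
  linarith [(abs_le.mp hi).1, hdom i]

theorem Matrix.posSemidef_smul_one_add_of_sum_abs_le {m : Type*} [Fintype m] [DecidableEq m]
    {C : Matrix m m ℝ} {c : ℝ} (hC : C.IsSymm) (hc : ∀ i, ∑ j, |C i j| ≤ c) :
    (c • 1 + C).PosSemidef := by
  refine posSemidef_of_sum_abs_offDiag_le ((isSymm_one.smul c).add hC) fun i => ?_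
  have hoff : ∀ j ∈ univ.erase i, |(c • 1 + C) i j| = |C i j| := fun j hj => by
    simp [one_apply_ne' (ne_of_mem_erase hj)]
  rw [sum_congr rfl hoff]
  simp only [add_apply, smul_apply, one_apply_eq, smul_eq_mul, mul_one]
  linarith [add_sum_erase univ (fun j => |C i j|) (mem_univ i), neg_abs_le (C i i), hc i]

theorem isHomogeneous_sigma (n : ℕ) : (sigma n).IsHomogeneous 1 :=
  IsHomogeneous.sum _ _ _ fun i _ => isHomogeneous_X ℝ i

theorem coeff_sigma_pow (n D : ℕ) (α : Fin n →₀ ℕ) :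
    coeff α (sigma n ^ D) = if (α.sum fun _ e => e) = D then (α.multinomial : ℝ) else 0 := by
  rw [sigma, coeff_sum_X_pow_of_fintype, Nat.cast_ite, Nat.cast_zero]

theorem ι_injective (n : ℕ) : Function.Injective (ι n) :=
  IsFractionRing.injective (MvPolynomial (Fin n) ℝ) (RatField n)

theorem ι_sigma_ne_zero {n : ℕ} (hn : 0 < n) : ι n (sigma n) ≠ 0 := by
  refine (map_ne_zero_iff _ (ι_injective n)).mpr fun h => ?_
  have hn' : (n : ℝ) = 0 := by simpa [sigma] using congrArg (eval fun _ => (1 : ℝ)) h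
  exact hn.ne' (by exact_mod_cast hn')

theorem exists_isHomogeneous_eq_div_sigma_pow {n : ℕ} (hn : 0 < n) {κ : Type*} [Fintype κ]
    {F : κ → RatField n}
    (hF : ∀ k, ∃ (d : ℕ) (f : MvPolynomial (Fin n) ℝ), f.IsHomogeneous d ∧
      F k = ι n f / ι n (sigma n) ^ d) :
    ∃ (D : ℕ) (g : κ → MvPolynomial (Fin n) ℝ),
      (∀ k, (g k).IsHomogeneous D) ∧ ∀ k, F k = ι n (g k) / ι n (sigma n) ^ D := by
  choose d f hf hF using hF
  have hle (k : κ) : d k ≤ univ.sup d := le_sup (mem_univ k)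
  refine ⟨univ.sup d, fun k => f k * sigma n ^ (univ.sup d - d k), fun k => ?_, fun k => ?_⟩
  · simpa [Nat.add_sub_cancel' (hle k)] using
      (hf k).mul ((isHomogeneous_sigma n).pow (univ.sup d - d k))
  · have hs := ι_sigma_ne_zero hn
    rw [hF k, map_mul, map_pow, div_eq_div_iff (pow_ne_zero _ hs) (pow_ne_zero _ hs), mul_assoc,
      ← pow_add, Nat.sub_add_cancel (hle k)]

theorem InSymLoc.exists_isHomogeneous {n r : ℕ} (hn : 0 < n)
    {G : Matrix (Fin r) (Fin r) (RatField n)} (hG : InSymLoc n r G) :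
    ∃ (D : ℕ) (g : Matrix (Fin r) (Fin r) (MvPolynomial (Fin n) ℝ)), g.IsSymm ∧
      (∀ i j, (g i j).IsHomogeneous D) ∧ G = of fun i j => ι n (g i j) / ι n (sigma n) ^ D := by
  obtain ⟨D, g, hg, hG_eq⟩ :=
    exists_isHomogeneous_eq_div_sigma_pow hn (F := fun p : Fin r × Fin r => G p.1 p.2)
      fun p => hG.2 p.1 p.2
  have hG_eq' : G = of fun i j => ι n (g (i, j)) / ι n (sigma n) ^ D := ext fun i j => hG_eq (i, j)
  refine ⟨D, of fun i j => g (i, j), IsSymm.ext fun i j => ?_, fun i j => hg (i, j), hG_eq'⟩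
  have hsymm := hG.1.apply i j
  rw [hG_eq', of_apply, of_apply,
    div_left_inj' (pow_ne_zero _ (ι_sigma_ne_zero hn))] at hsymm
  exact ι_injective n hsymm

def coeffMatrices {σ m k R : Type*} [DecidableEq σ] [Fintype m] [Fintype k] [CommSemiring R]
    (P : Matrix m k (MvPolynomial σ R)) : (σ →₀ ℕ) →₀ Matrix m k R :=
  Finsupp.onFinset (univ.biUnion fun p : m × k => (P p.1 p.2).support) (fun α => P.map (coeff α))
    fun α hα => by
      contrapose! hα
      ext i j
      by_contra h
      exact hα (mem_biUnion.mpr ⟨(i, j), mem_univ _, mem_support_iff.mpr h⟩)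

@[simp]
theorem coeffMatrices_apply {σ m k R : Type*} [DecidableEq σ] [Fintype m] [Fintype k]
    [CommSemiring R] (P : Matrix m k (MvPolynomial σ R)) (α : σ →₀ ℕ) :
    coeffMatrices P α = P.map (coeff α) :=
  rfl

theorem rep_coeffMatrices {n r D : ℕ} {P : Matrix (Fin r) (Fin r) (MvPolynomial (Fin n) ℝ)}
    (hP : ∀ i j, (P i j).IsHomogeneous D) :
    rep n r (coeffMatrices P) = of fun i j => ι n (P i j) / ι n (sigma n) ^ D := by
  ext i j
  have hterm (α : Fin n →₀ ℕ) :
      (ι n (monomial α 1) / ι n (sigma n) ^ (α.sum fun _ e => e)) * ι n (C (coeff α (P i j))) =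
        ι n (monomial α (coeff α (P i j))) / ι n (sigma n) ^ D := by
    by_cases hα : coeff α (P i j) = 0
    · simp [hα]
    · have hdeg : α.degree = D := by_contra fun h => hα ((hP i j).coeff_eq_zero h)
      rw [show (α.sum fun _ e => e) = D from hdeg, div_mul_eq_mul_div, ← map_mul, mul_comm,
        C_mul_monomial, mul_one]
  rw [rep, coeffMatrices, Finsupp.onFinset_sum _ fun α => by simp, Matrix.sum_apply]
  simp only [Matrix.smul_apply, map_apply, smul_eq_mul, hterm]
  rw [← sum_div, ← map_sum, of_apply]
  have hsupp : (P i j).support ⊆ univ.biUnion fun p : Fin r × Fin r => (P p.1 p.2).support :=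
    subset_biUnion_of_mem (fun p : Fin r × Fin r => (P p.1 p.2).support) (mem_univ (i, j))
  rw [← sum_subset hsupp fun α _ hα => by rw [notMem_support_iff.mp hα, map_zero],
    support_sum_monomial_coeff]

theorem abs_coeff_le_sum_abs_coeff {σ : Type*} (p : MvPolynomial σ ℝ) (α : σ →₀ ℕ) :
    |coeff α p| ≤ ∑ β ∈ p.support, |coeff β p| := by
  by_cases hα : α ∈ p.support
  · exact single_le_sum (f := fun β => |coeff β p|) (fun _ _ => abs_nonneg _) hα
  · rw [notMem_support_iff.mp hα, abs_zero]
    positivity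

theorem exists_forall_sum_abs_coeff_le {σ m k : Type*} [Fintype m] [Fintype k]
    (g : Matrix m k (MvPolynomial σ ℝ)) :
    ∃ N : ℕ, 0 < N ∧ ∀ i α, ∑ j, |coeff α (g i j)| ≤ N := by
  set total := ∑ i, ∑ j, ∑ β ∈ (g i j).support, |coeff β (g i j)|
  obtain ⟨N, hN⟩ := exists_nat_gt total
  refine ⟨N, Nat.cast_pos.mp (lt_of_le_of_lt (by positivity) hN), fun i α => ?_⟩
  calc ∑ j, |coeff α (g i j)| ≤ ∑ j, ∑ β ∈ (g i j).support, |coeff β (g i j)| :=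
        sum_le_sum fun j _ => abs_coeff_le_sum_abs_coeff _ _
    _ ≤ total := single_le_sum (f := fun i => ∑ j, ∑ β ∈ (g i j).support, |coeff β (g i j)|)
        (fun _ _ => by positivity) (mem_univ i)
    _ ≤ N := hN.le

theorem posSemidef_coeffMatrices_natCast_mul_sigma_pow_smul_one_add {n r D N : ℕ}
    {g : Matrix (Fin r) (Fin r) (MvPolynomial (Fin n) ℝ)} (hg : g.IsSymm)
    (hg_hom : ∀ i j, (g i j).IsHomogeneous D) (hN : ∀ i α, ∑ j, |coeff α (g i j)| ≤ N)
    (α : Fin n →₀ ℕ) :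
    (coeffMatrices (((N : MvPolynomial (Fin n) ℝ) * sigma n ^ D) • 1 + g) α).PosSemidef := by
  have hcoeff : coeffMatrices (((N : MvPolynomial (Fin n) ℝ) * sigma n ^ D) • 1 + g) α =
      ((N : ℝ) * coeff α (sigma n ^ D)) • 1 + g.map (coeff α) := by
    ext i j
    by_cases h : i = j
    · subst h
      simp [← C_eq_coe_nat, -map_natCast, coeff_C_mul]
    · simp [one_apply_ne h]
  rw [hcoeff]
  refine posSemidef_smul_one_add_of_sum_abs_le (hg.map _) fun i => ?_
  rw [coeff_sigma_pow]
  split_ifs with hα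
  · calc ∑ j, |g.map (coeff α) i j| ≤ N := hN i α
      _ ≤ N * α.multinomial :=
        le_mul_of_one_le_right (Nat.cast_nonneg _) (by exact_mod_cast Nat.multinomial_pos _ _)
  · have hzero (j : Fin r) : coeff α (g i j) = 0 := (hg_hom i j).coeff_eq_zero hα
    simp [hzero]

theorem isHomogeneous_natCast_mul_sigma_pow_smul_one_add {n r D : ℕ} (N : ℕ)
    {g : Matrix (Fin r) (Fin r) (MvPolynomial (Fin n) ℝ)}
    (hg_hom : ∀ i j, (g i j).IsHomogeneous D) (i j : Fin r) :
    ((((N : MvPolynomial (Fin n) ℝ) * sigma n ^ D) • 1 + g) i j).IsHomogeneous D := by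
  by_cases h : i = j
  · subst h
    have hdiag : ((N : MvPolynomial (Fin n) ℝ) * sigma n ^ D).IsHomogeneous D := by
      have h := (isHomogeneous_C (Fin n) (N : ℝ)).mul ((isHomogeneous_sigma n).pow D)
      rwa [C_eq_coe_nat, zero_add, one_mul] at h
    simpa using hdiag.add (hg_hom i i)
  · simpa [one_apply_ne h] using hg_hom i j

theorem natCast_smul_one_add_div_sigma_pow {n r D : ℕ} (hn : 0 < n) (N : ℕ)
    (g : Matrix (Fin r) (Fin r) (MvPolynomial (Fin n) ℝ)) :
    (N : RatField n) • (1 : Matrix (Fin r) (Fin r) (RatField n)) +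
        of (fun i j => ι n (g i j) / ι n (sigma n) ^ D) =
      of fun i j => ι n ((((N : MvPolynomial (Fin n) ℝ) * sigma n ^ D) • 1 + g) i j) /
        ι n (sigma n) ^ D := by
  have hs := pow_ne_zero D (ι_sigma_ne_zero hn)
  ext i j
  by_cases h : i = j
  · subst h
    simp [add_div, hs]
  · simp [one_apply_ne h]

/-- The identity matrix is an order unit of `(Sym_r(ℝ[x]_{(Σ)}), Sym_r(ℝ[x]_{(Σ)})₊)`:
for every `G ∈ Sym_r(ℝ[x]_{(Σ)})` there is a positive integer `N` such that `N·I + G` has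
positive semidefinite coefficients. -/
theorem identity_is_order_unit {n r : ℕ} (hn : 0 < n)
    (G : Matrix (Fin r) (Fin r) (RatField n)) (hG : InSymLoc n r G) :
    ∃ N : ℕ, 0 < N ∧
      HasPSDCoeffs n r ((N : RatField n) • (1 : Matrix (Fin r) (Fin r) (RatField n)) + G) := by
  obtain ⟨D, g, hg, hg_hom, rfl⟩ := hG.exists_isHomogeneous hn
  obtain ⟨N, hN_pos, hN⟩ := exists_forall_sum_abs_coeff_le g
  refine ⟨N, hN_pos, _,
    posSemidef_coeffMatrices_natCast_mul_sigma_pow_smul_one_add hg hg_hom hN, ?_⟩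
  rw [natCast_smul_one_add_div_sigma_pow hn,
    rep_coeffMatrices (isHomogeneous_natCast_mul_sigma_pow_smul_one_add N hg_hom)]

end
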